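/- arXiv:2008.08308 — 3 statements merged into one kernel-verified Lean document; each statement's English description precedes it below -/
import Mathlib

section
/- (Pascal's theorem) Let K be a field and let A₁, A₂, A₃, C₁, C₂, C₃ be six distinct points in the projective plane ℙ²(K) lying on an irreducible conic. Define B₁ = (A₂C₃) ∩ (A₃C₂), B₂ = (A₃C₁) ∩ (A₁C₃), B₃ = (A₁C₂) ∩ (A₂C₁), assuming these pairs of lines are distinct so the intersection points are well defined. Then B₁, B₂, B₃ are collinear. -/
/-- Determinant of the 3×3 matrix with rows `p`, `q`, `r`; it vanishes iff the
three points of ℙ²(K) represented by `p`, `q`, `r` are collinear. -/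
def det3 {K : Type*} [CommRing K] (p q r : Fin 3 → K) : K :=
  Matrix.det (Matrix.of ![p, q, r])

/-- Cross product in `K³`. -/
def cross3 {K : Type*} [CommRing K] (u v : Fin 3 → K) : Fin 3 → K :=
  ![u 1 * v 2 - u 2 * v 1, u 2 * v 0 - u 0 * v 2, u 0 * v 1 - u 1 * v 0]

/-- Dot product in `K³`. -/
def dot3 {K : Type*} [CommRing K] (u v : Fin 3 → K) : K :=
  u 0 * v 0 + u 1 * v 1 + u 2 * v 2

/-- Veronese embedding of a point of `K³` into `K⁶`. -/
def ver6 {K : Type*} [CommRing K] (x : Fin 3 → K) : Fin 6 → K :=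
  ![x 0 ^ 2, x 0 * x 1, x 0 * x 2, x 1 ^ 2, x 1 * x 2, x 2 ^ 2]

lemma det3_eq_dot3 {K : Type*} [CommRing K] (p q r : Fin 3 → K) :
    det3 p q r = dot3 p (cross3 q r) := by
  simp [det3, dot3, cross3, Matrix.det_fin_three]; ring

lemma det3_cyc {K : Type*} [CommRing K] (p q r : Fin 3 → K) :
    det3 p q r = det3 r p q := by
  simp [det3, Matrix.det_fin_three]; ring

lemma dot3_smul_right {K : Type*} [CommRing K] (t : K) (u v : Fin 3 → K) :
    dot3 u (t • v) = t * dot3 u v := by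
  simp [dot3, Pi.smul_apply, smul_eq_mul]; ring

lemma dot3_cross3_left {K : Type*} [CommRing K] (u v : Fin 3 → K) :
    dot3 u (cross3 u v) = 0 := by
  simp [dot3, cross3]; ring

lemma dot3_cross3_right {K : Type*} [CommRing K] (u v : Fin 3 → K) :
    dot3 v (cross3 u v) = 0 := by
  simp [dot3, cross3]; ring

lemma det3_smul {K : Type*} [CommRing K] (s t u : K) (p q r : Fin 3 → K) :
    det3 (s • p) (t • q) (u • r) = s * t * u * det3 p q r := by
  simp [det3, Matrix.det_fin_three, Pi.smul_apply, smul_eq_mul]; ring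

lemma cross3_eq_zero {K : Type*} [Field K] (x y : Fin 3 → K)
    (h : cross3 x y = 0) (hy : y ≠ 0) : ∃ t : K, x = t • y := by
  have h0 : x 1 * y 2 - x 2 * y 1 = 0 := congrFun h 0
  have h1 : x 2 * y 0 - x 0 * y 2 = 0 := congrFun h 1
  have h2 : x 0 * y 1 - x 1 * y 0 = 0 := congrFun h 2
  have hyi : y 0 ≠ 0 ∨ y 1 ≠ 0 ∨ y 2 ≠ 0 := by
    by_contra hc
    push_neg at hc
    exact hy (funext fun i => by fin_cases i <;> simp [hc.1, hc.2.1, hc.2.2])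
  have solve : ∀ t : K, x 0 = t * y 0 → x 1 = t * y 1 → x 2 = t * y 2 →
      ∃ t : K, x = t • y := by
    intro t e0 e1 e2
    refine ⟨t, funext fun i => ?_⟩
    fin_cases i <;> simp only [Pi.smul_apply, smul_eq_mul] <;>
      first | exact e0 | exact e1 | exact e2
  rcases hyi with hy' | hy' | hy'
  · refine solve (x 0 / y 0) (by field_simp) ?_ ?_
    · field_simp
      linear_combination -h2
    · field_simp
      linear_combination h1
  · refine solve (x 1 / y 1) ?_ (by field_simp) ?_
    · field_simp
      linear_combination h2
    · field_simp
      linear_combination -h0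
  · refine solve (x 2 / y 2) ?_ ?_ (by field_simp)
    · field_simp
      linear_combination -h1
    · field_simp
      linear_combination h0

/-- If `x` is orthogonal to `u` and to `v`, then `x` is parallel to `u × v`. -/
lemma cross3_of_orth {K : Type*} [CommRing K] (x u v : Fin 3 → K)
    (hu : dot3 x u = 0) (hv : dot3 x v = 0) : cross3 x (cross3 u v) = 0 := by
  have hu' : x 0 * u 0 + x 1 * u 1 + x 2 * u 2 = 0 := hu
  have hv' : x 0 * v 0 + x 1 * v 1 + x 2 * v 2 = 0 := hv
  funext i
  fin_cases i
  · show x 1 * (u 0 * v 1 - u 1 * v 0) - x 2 * (u 2 * v 0 - u 0 * v 2) = 0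
    linear_combination u 0 * hv' - v 0 * hu'
  · show x 2 * (u 1 * v 2 - u 2 * v 1) - x 0 * (u 0 * v 1 - u 1 * v 0) = 0
    linear_combination u 1 * hv' - v 1 * hu'
  · show x 0 * (u 2 * v 0 - u 0 * v 2) - x 1 * (u 1 * v 2 - u 2 * v 1) = 0
    linear_combination u 2 * hv' - v 2 * hu'

/-- Two distinct points of `ℙ²` have a nonzero cross product. -/
lemma cross3_ne_zero {K : Type*} [Field K] (u v : Fin 3 → K)
    (hu : u ≠ 0) (hv : v ≠ 0) (hd : ∀ c : K, c • u ≠ v) : cross3 u v ≠ 0 := by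
  intro h
  obtain ⟨t, ht⟩ := cross3_eq_zero u v h hv
  have ht0 : t ≠ 0 := by rintro rfl; simp at ht; exact hu ht
  exact hd t⁻¹ (by rw [ht, smul_smul, inv_mul_cancel₀ ht0, one_smul])

/-- Two distinct lines of `ℙ²` (given by nonzero normal vectors `n₁ = u₁ × v₁`,
`n₂ = u₂ × v₂`) have a well-defined intersection point `n₁ × n₂ ≠ 0`. -/
lemma lines_cross_ne_zero {K : Type*} [Field K] (u1 v1 u2 v2 : Fin 3 → K)
    (h1 : cross3 u1 v1 ≠ 0) (h2 : cross3 u2 v2 ≠ 0)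
    (hl : ¬ (det3 u1 v1 u2 = 0 ∧ det3 u1 v1 v2 = 0)) :
    cross3 (cross3 u1 v1) (cross3 u2 v2) ≠ 0 := by
  intro h
  obtain ⟨t, ht⟩ := cross3_eq_zero _ _ h h2
  refine hl ⟨?_, ?_⟩
  · rw [det3_cyc, det3_eq_dot3, ht, dot3_smul_right, dot3_cross3_left, mul_zero]
  · rw [det3_cyc, det3_eq_dot3, ht, dot3_smul_right, dot3_cross3_right, mul_zero]

/-- The six exponent vectors of degree 2 on three variables. -/
def M6 : Fin 6 → (Fin 3 → ℕ) :=
  ![![2,0,0], ![1,1,0], ![1,0,1], ![0,2,0], ![0,1,1], ![0,0,2]]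

noncomputable def D6 : Fin 6 → (Fin 3 →₀ ℕ) := fun j => Finsupp.equivFunOnFinite.symm (M6 j)

lemma D6_apply (j : Fin 6) (i : Fin 3) : D6 j i = M6 j i := rfl

lemma degree_eq_sum (d : Fin 3 →₀ ℕ) : d.degree = d 0 + d 1 + d 2 := by
  rw [Finsupp.degree, ← Fin.sum_univ_three (fun i => d i)]
  exact Finset.sum_subset (Finset.subset_univ _)
    (fun i _ hi => Finsupp.notMem_support_iff.mp hi)

lemma mem_D6 (d : Fin 3 →₀ ℕ) (hd : d.degree = 2) : ∃ j, d = D6 j := by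
  rw [degree_eq_sum] at hd
  have h : (d 0 = 2 ∧ d 1 = 0 ∧ d 2 = 0) ∨ (d 0 = 1 ∧ d 1 = 1 ∧ d 2 = 0) ∨
      (d 0 = 1 ∧ d 1 = 0 ∧ d 2 = 1) ∨ (d 0 = 0 ∧ d 1 = 2 ∧ d 2 = 0) ∨
      (d 0 = 0 ∧ d 1 = 1 ∧ d 2 = 1) ∨ (d 0 = 0 ∧ d 1 = 0 ∧ d 2 = 2) := by omega
  have key : ∀ j : Fin 6, (∀ i : Fin 3, d i = M6 j i) → d = D6 j := by
    intro j hj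
    have : (⇑d : Fin 3 → ℕ) = M6 j := funext hj
    refine Finsupp.equivFunOnFinite.injective ?_
    simp only [D6, Equiv.apply_symm_apply]; exact this
  rcases h with h | h | h | h | h | h
  · exact ⟨0, key 0 (fun i => by fin_cases i; exacts [h.1, h.2.1, h.2.2])⟩
  · exact ⟨1, key 1 (fun i => by fin_cases i; exacts [h.1, h.2.1, h.2.2])⟩
  · exact ⟨2, key 2 (fun i => by fin_cases i; exacts [h.1, h.2.1, h.2.2])⟩
  · exact ⟨3, key 3 (fun i => by fin_cases i; exacts [h.1, h.2.1, h.2.2])⟩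
  · exact ⟨4, key 4 (fun i => by fin_cases i; exacts [h.1, h.2.1, h.2.2])⟩
  · exact ⟨5, key 5 (fun i => by fin_cases i; exacts [h.1, h.2.1, h.2.2])⟩

lemma D6_injective : Function.Injective D6 := by
  have hM : Function.Injective M6 := by decide
  intro j j' h
  apply hM
  have h2 := congrArg (fun f => (Finsupp.equivFunOnFinite f : Fin 3 → ℕ)) h
  simpa [D6] using h2

set_option maxHeartbeats 4000000 in
set_option maxRecDepth 100000 in
/-- The key polynomial identity behind Pascal's theorem: the determinant of the
three intersection points of opposite sides of the hexagon equals the 6×6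
determinant of the Veronese images of the six vertices. -/
theorem pascal_id {K : Type*} [CommRing K] (a1 a2 a3 c1 c2 c3 : Fin 3 → K) :
    det3 (cross3 (cross3 a2 c3) (cross3 a3 c2))
      (cross3 (cross3 a3 c1) (cross3 a1 c3))
      (cross3 (cross3 a1 c2) (cross3 a2 c1)) =
    Matrix.det (Matrix.of ![ver6 a1, ver6 a2, ver6 a3, ver6 c1, ver6 c2, ver6 c3]) := by
  simp only [det3, Matrix.det_fin_three, Matrix.det_succ_row_zero, Fin.sum_univ_succ,
    Matrix.of_apply, Matrix.cons_val', Matrix.cons_val_zero, Matrix.cons_val_one,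
    Matrix.head_cons, Matrix.submatrix_apply, Fin.succ_zero_eq_one, Matrix.cons_val_fin_one,
    Matrix.head_fin_const, Fin.succ_one_eq_two, Matrix.submatrix_submatrix, Matrix.det_fin_one,
    Matrix.cons_val_succ, Function.comp, Fin.succAbove_zero, Matrix.empty_val',
    Matrix.cons_val_two, Matrix.tail_cons, Matrix.head_fin_const, Fin.succAbove,
    Fin.castSucc, Fin.castAdd, Fin.castLE, Fin.lt_def, cross3, ver6,
    Finset.univ_unique, Finset.sum_singleton, Fin.val_zero, Fin.val_succ]
  norm_num
  simp only [Matrix.cons_val]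
  ring

lemma eval_eq_sum6 {K : Type*} [CommRing K] (q : MvPolynomial (Fin 3) K)
    (hq2 : q.IsHomogeneous 2) (x : Fin 3 → K) :
    MvPolynomial.eval x q = ∑ j, MvPolynomial.coeff (D6 j) q * ver6 x j := by
  rw [MvPolynomial.eval_eq']
  have hsub : q.support ⊆ Finset.image D6 Finset.univ := by
    intro d hd
    have hdeg : d.degree = 2 := by
      by_contra hne
      exact (MvPolynomial.mem_support_iff.mp hd) (hq2.coeff_eq_zero hne)
    obtain ⟨j, hj⟩ := mem_D6 d hdeg
    exact Finset.mem_image.mpr ⟨j, Finset.mem_univ j, hj.symm⟩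
  rw [Finset.sum_subset hsub (fun d _ hd => by
    rw [MvPolynomial.notMem_support_iff.mp hd, zero_mul])]
  rw [Finset.sum_image (fun j _ j' _ h => D6_injective h)]
  refine Finset.sum_congr rfl fun j _ => ?_
  fin_cases j <;>
    · rw [Fin.prod_univ_three]
      norm_num [D6_apply, M6, ver6, Matrix.cons_val_two, Matrix.tail_cons, Matrix.head_cons]
      try ring

lemma q_eq_zero_of_coeffs {K : Type*} [CommRing K] (q : MvPolynomial (Fin 3) K)
    (hq2 : q.IsHomogeneous 2) (h : ∀ j, MvPolynomial.coeff (D6 j) q = 0) : q = 0 := by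
  apply MvPolynomial.ext
  intro d
  rw [MvPolynomial.coeff_zero]
  by_cases hdeg : d.degree = 2
  · obtain ⟨j, hj⟩ := mem_D6 d hdeg
    rw [hj]; exact h j
  · exact hq2.coeff_eq_zero hdeg

/-- **Pascal's theorem.** Six distinct points `A₁,A₂,A₃,C₁,C₂,C₃` of ℙ²(K) on an
irreducible conic; `B₁ = (A₂C₃) ∩ (A₃C₂)`, `B₂ = (A₃C₁) ∩ (A₁C₃)`,
`B₃ = (A₁C₂) ∩ (A₂C₁)` (the pairs of lines being distinct). Then `B₁,B₂,B₃`
are collinear. Points are nonzero vectors of `K³` up to scaling; the conic is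
the zero set of an irreducible homogeneous quadratic form `q`. -/
theorem stmt6 {K : Type*} [Field K]
    (q : MvPolynomial (Fin 3) K) (hq2 : q.IsHomogeneous 2) (hqirr : Irreducible q)
    (a1 a2 a3 c1 c2 c3 : Fin 3 → K)
    (ha1 : a1 ≠ 0) (ha2 : a2 ≠ 0) (ha3 : a3 ≠ 0)
    (hc1 : c1 ≠ 0) (hc2 : c2 ≠ 0) (hc3 : c3 ≠ 0)
    -- the six points lie on the conic
    (hCa1 : MvPolynomial.eval a1 q = 0) (hCa2 : MvPolynomial.eval a2 q = 0)
    (hCa3 : MvPolynomial.eval a3 q = 0) (hCc1 : MvPolynomial.eval c1 q = 0)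
    (hCc2 : MvPolynomial.eval c2 q = 0) (hCc3 : MvPolynomial.eval c3 q = 0)
    -- the six points are pairwise distinct as points of ℙ²(K)
    (hdist : List.Pairwise (fun p p' => ∀ c : K, c • p ≠ p') [a1, a2, a3, c1, c2, c3])
    -- the three pairs of lines are distinct
    (hl1 : ¬ (det3 a2 c3 a3 = 0 ∧ det3 a2 c3 c2 = 0))
    (hl2 : ¬ (det3 a3 c1 a1 = 0 ∧ det3 a3 c1 c3 = 0))
    (hl3 : ¬ (det3 a1 c2 a2 = 0 ∧ det3 a1 c2 c1 = 0))
    -- the intersection points B₁, B₂, B₃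
    (b1 b2 b3 : Fin 3 → K) (hb1 : b1 ≠ 0) (hb2 : b2 ≠ 0) (hb3 : b3 ≠ 0)
    (hb1on : det3 b1 a2 c3 = 0 ∧ det3 b1 a3 c2 = 0)
    (hb2on : det3 b2 a3 c1 = 0 ∧ det3 b2 a1 c3 = 0)
    (hb3on : det3 b3 a1 c2 = 0 ∧ det3 b3 a2 c1 = 0) :
    det3 b1 b2 b3 = 0 := by
  simp only [List.pairwise_cons, List.mem_cons, List.not_mem_nil, List.mem_singleton,
    List.Pairwise.nil] at hdist
  -- distinctness of relevant pairs
  have hd13 : ∀ c : K, c • a1 ≠ c3 := hdist.1 c3 (Or.inr (Or.inr (Or.inr (Or.inr (Or.inl rfl)))))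
  have hd12 : ∀ c : K, c • a1 ≠ c2 := hdist.1 c2 (Or.inr (Or.inr (Or.inr (Or.inl rfl))))
  have hd23 : ∀ c : K, c • a2 ≠ c3 := hdist.2.1 c3 (Or.inr (Or.inr (Or.inr (Or.inl rfl))))
  have hd21 : ∀ c : K, c • a2 ≠ c1 := hdist.2.1 c1 (Or.inr (Or.inl rfl))
  have hd32 : ∀ c : K, c • a3 ≠ c2 := hdist.2.2.1 c2 (Or.inr (Or.inl rfl))
  have hd31 : ∀ c : K, c • a3 ≠ c1 := hdist.2.2.1 c1 (Or.inl rfl)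
  -- the six side lines are genuine lines
  have hn1 : cross3 a2 c3 ≠ 0 := cross3_ne_zero _ _ ha2 hc3 hd23
  have hn2 : cross3 a3 c2 ≠ 0 := cross3_ne_zero _ _ ha3 hc2 hd32
  have hn3 : cross3 a3 c1 ≠ 0 := cross3_ne_zero _ _ ha3 hc1 hd31
  have hn4 : cross3 a1 c3 ≠ 0 := cross3_ne_zero _ _ ha1 hc3 hd13
  have hn5 : cross3 a1 c2 ≠ 0 := cross3_ne_zero _ _ ha1 hc2 hd12
  have hn6 : cross3 a2 c1 ≠ 0 := cross3_ne_zero _ _ ha2 hc1 hd21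
  have hL1 : cross3 (cross3 a2 c3) (cross3 a3 c2) ≠ 0 :=
    lines_cross_ne_zero _ _ _ _ hn1 hn2 hl1
  have hL2 : cross3 (cross3 a3 c1) (cross3 a1 c3) ≠ 0 :=
    lines_cross_ne_zero _ _ _ _ hn3 hn4 hl2
  have hL3 : cross3 (cross3 a1 c2) (cross3 a2 c1) ≠ 0 :=
    lines_cross_ne_zero _ _ _ _ hn5 hn6 hl3
  -- each bᵢ is a scalar multiple of the corresponding double cross product
  have ho11 : dot3 b1 (cross3 a2 c3) = 0 := by rw [← det3_eq_dot3]; exact hb1on.1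
  have ho12 : dot3 b1 (cross3 a3 c2) = 0 := by rw [← det3_eq_dot3]; exact hb1on.2
  have ho21 : dot3 b2 (cross3 a3 c1) = 0 := by rw [← det3_eq_dot3]; exact hb2on.1
  have ho22 : dot3 b2 (cross3 a1 c3) = 0 := by rw [← det3_eq_dot3]; exact hb2on.2
  have ho31 : dot3 b3 (cross3 a1 c2) = 0 := by rw [← det3_eq_dot3]; exact hb3on.1
  have ho32 : dot3 b3 (cross3 a2 c1) = 0 := by rw [← det3_eq_dot3]; exact hb3on.2
  obtain ⟨s1, hs1⟩ := cross3_eq_zero b1 _ (cross3_of_orth _ _ _ ho11 ho12) hL1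
  obtain ⟨s2, hs2⟩ := cross3_eq_zero b2 _ (cross3_of_orth _ _ _ ho21 ho22) hL2
  obtain ⟨s3, hs3⟩ := cross3_eq_zero b3 _ (cross3_of_orth _ _ _ ho31 ho32) hL3
  rw [hs1, hs2, hs3, det3_smul]
  -- it remains to see that the three double cross products are collinear
  rw [pascal_id]
  -- the 6×6 Veronese determinant vanishes since the conic passes through all six
  have hm : (fun j => MvPolynomial.coeff (D6 j) q) ≠ 0 := by
    intro h0
    exact hqirr.ne_zero (q_eq_zero_of_coeffs q hq2 (fun j => congrFun h0 j))
  have hVm : Matrix.mulVec (Matrix.of ![ver6 a1, ver6 a2, ver6 a3, ver6 c1, ver6 c2, ver6 c3])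
      (fun j => MvPolynomial.coeff (D6 j) q) = 0 := by
    funext i
    have e1 := (eval_eq_sum6 q hq2 a1).symm.trans hCa1
    have e2 := (eval_eq_sum6 q hq2 a2).symm.trans hCa2
    have e3 := (eval_eq_sum6 q hq2 a3).symm.trans hCa3
    have e4 := (eval_eq_sum6 q hq2 c1).symm.trans hCc1
    have e5 := (eval_eq_sum6 q hq2 c2).symm.trans hCc2
    have e6 := (eval_eq_sum6 q hq2 c3).symm.trans hCc3
    rw [Fin.sum_univ_six] at e1 e2 e3 e4 e5 e6
    fin_cases i
    · show dotProduct (ver6 a1) _ = 0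
      rw [dotProduct, Fin.sum_univ_six]
      linear_combination e1
    · show dotProduct (ver6 a2) _ = 0
      rw [dotProduct, Fin.sum_univ_six]
      linear_combination e2
    · show dotProduct (ver6 a3) _ = 0
      rw [dotProduct, Fin.sum_univ_six]
      linear_combination e3
    · show dotProduct (ver6 c1) _ = 0
      rw [dotProduct, Fin.sum_univ_six]
      linear_combination e4
    · show dotProduct (ver6 c2) _ = 0
      rw [dotProduct, Fin.sum_univ_six]
      linear_combination e5
    · show dotProduct (ver6 c3) _ = 0
      rw [dotProduct, Fin.sum_univ_six]
      linear_combination e6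
  have hdet := Matrix.exists_mulVec_eq_zero_iff.mp
    ⟨_, hm, hVm⟩
  rw [hdet, mul_zero]
end

section
/- Let K be a field of characteristic ≠ 2 and α, β ∈ K. Define B(u,v) = [α(α+1)(u²+v²−1) − (α+1)uv + β(u+v) − β²] / [(u²−1)(v²−1)]. Let f(u,v) = (ũ, ṽ) with ũ = v and ṽ = (αuv + βu − 1)/(u − αv − β). Then B(ũ, ṽ) = B(u, v) for all (u,v) where all denominators are nonzero. -/
def Bint {K : Type*} [Field K] (α β u v : K) : K :=
  (α * (α + 1) * (u ^ 2 + v ^ 2 - 1) - (α + 1) * u * v + β * (u + v) - β ^ 2)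
    / ((u ^ 2 - 1) * (v ^ 2 - 1))

set_option maxRecDepth 16000 in
set_option maxHeartbeats 2000000 in
/-- The QRT-root map `f(u,v) = (v, (αuv + βu - 1)/(u - αv - β))` preserves the
integral `B` wherever all denominators are nonzero. -/
theorem stmt8 {K : Type*} [Field K] (hchar2 : (2 : K) ≠ 0) (α β u v : K)
    (h1 : (u ^ 2 - 1) * (v ^ 2 - 1) ≠ 0)
    (h2 : u - α * v - β ≠ 0)
    (h3 : (v ^ 2 - 1) * (((α * u * v + β * u - 1) / (u - α * v - β)) ^ 2 - 1) ≠ 0) :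
    Bint α β v ((α * u * v + β * u - 1) / (u - α * v - β)) = Bint α β u v := by
  have hwd : (α * u * v + β * u - 1) / (u - α * v - β) * (u - α * v - β)
      = α * u * v + β * u - 1 := div_mul_cancel₀ _ h2
  generalize hw : (α * u * v + β * u - 1) / (u - α * v - β) = w at hwd h3 ⊢
  have hd2 : (u - α * v - β) ^ 2 ≠ 0 := pow_ne_zero _ h2
  unfold Bint
  rw [div_eq_div_iff h3 h1]
  apply mul_right_cancel₀ hd2
  linear_combination ((u^2-1) * (v^2-1) *
      (α * (α+1) * (w * (u - α*v - β) + (α*u*v + β*u - 1)) + (β - (α+1)*v) * (u - α*v - β))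
    - (α * (α + 1) * (u ^ 2 + v ^ 2 - 1) - (α + 1) * u * v + β * (u + v) - β ^ 2)
      * (v^2-1) * (w * (u - α*v - β) + (α*u*v + β*u - 1))) * hwd
end

section
/- Let K be a field and α, β ∈ K. Suppose (u,v) and (ũ,ṽ) in K² satisfy ũ = v and ṽ(u − αv − β) = αuv + βu − 1 (with u − αv − β ≠ 0). Define x, y, x̃, ỹ by u = (1 + βx + y)/x, v = (1 + βx − y)/x, ũ = (1 + βx̃ + ỹ)/x̃, ṽ = (1 + βx̃ − ỹ)/x̃ (assuming x, x̃ ≠ 0 and the relations are solvable). Then the following two bilinear relations hold: x̃ − x = x·ỹ + x̃·y, and ỹ − y = (1 − 2α) − 2αβ(x + x̃) + (1 − β²(1 + 2α))·x·x̃ − (1 + 2α)·y·ỹ. -/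
/-- The change of variables `u = (1+βx+y)/x`, `v = (1+βx-y)/x` (sending the
double Pascal line to infinity) transforms the QRT-root map into a Kahan-type
discretization given by two bilinear equations. -/
theorem stmt10 {K : Type*} [Field K] (α β : K)
    (u v ut vt x y xt yt : K)
    (hx : x ≠ 0) (hxt : xt ≠ 0)
    (hu : u = (1 + β * x + y) / x) (hv : v = (1 + β * x - y) / x)
    (hut : ut = (1 + β * xt + yt) / xt) (hvt : vt = (1 + β * xt - yt) / xt)
    (hden : u - α * v - β ≠ 0)
    (hmap1 : ut = v)
    (hmap2 : vt * (u - α * v - β) = α * u * v + β * u - 1) :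
    xt - x = x * yt + xt * y ∧
    yt - y = (1 - 2 * α) - 2 * α * β * (x + xt)
      + (1 - β ^ 2 * (1 + 2 * α)) * x * xt - (1 + 2 * α) * y * yt := by
  subst hu hv hut hvt
  have h1' : (1 + β * xt + yt) * x = (1 + β * x - y) * xt :=
    (div_eq_div_iff hxt hx).mp hmap1
  have h2 : (1 + β * xt - yt) * (1 - α + (1 + α) * y - α * β * x) * x
      = α * (1 + β * x + y) * (1 + β * x - y) * xt
        + β * (1 + β * x + y) * x * xt - x * x * xt := by
    have hxx : x * x ≠ 0 := mul_ne_zero hx hx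
    apply mul_left_cancel₀ hxx
    field_simp at hmap2
    linear_combination (x * x) * hmap2
  have key : x * xt * (yt - y - ((1 - 2 * α) - 2 * α * β * (x + xt)
      + (1 - β ^ 2 * (1 + 2 * α)) * x * xt - (1 + 2 * α) * y * yt)) = 0 := by
    linear_combination (-xt) * h2 + α * xt * (1 + y + β * x) * h1'
  have hxxt : x * xt ≠ 0 := mul_ne_zero hx hxt
  constructor
  · linear_combination -h1'
  · have h := (mul_eq_zero.mp key).resolve_left hxxt
    linear_combination h
end
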